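/- Freshness of learnt clauses under eager unit propagation and minimal backjumping: in the transition system →f (decide with no unit clause available, unitPropagate, conflict, explain, backjumpLearn to minimal backjump levels, restart), if s₀ is the initial state for F₀, s₀ →f* s_A, and the backjumpLearn rule applies in s_A = (M_A, Fl_A, C_A, ⊤, lnt_A), then the learnt clause C_A does not already occur in F₀ @ Fl_A. -/

import Mathlib

namespace SatFormal

/-- Propositional literals: positive or negative variables (variables are naturals). -/
inductive Literal where
  | Pos : Nat → Literal
  | Neg : Nat → Literal
deriving DecidableEq, Repr

/-- The variable of a literal. -/
def Literal.var : Literal → Nat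
  | .Pos n => n
  | .Neg n => n

/-- The opposite literal. -/
def Literal.opp : Literal → Literal
  | .Pos n => .Neg n
  | .Neg n => .Pos n

abbrev Clause := List Literal
abbrev Formula := List Clause
/-- A trail is a list of annotated literals: (literal, decision flag). -/
abbrev Trail := List (Literal × Bool)

/-- Underlying literals of a trail. -/
def elements (M : Trail) : List Literal := M.map Prod.fst
/-- Decision literals of a trail. -/
def decisions (M : Trail) : List Literal := (M.filter (fun a => a.2)).map Prod.fst
/-- Number of decision literals. -/
def currentLevel (M : Trail) : Nat := (M.filter (fun a => a.2)).length

/-- Prefix of the trail up to and including the first occurrence of literal `l`. -/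
def prefixTo (l : Literal) (M : Trail) : Trail :=
  M.takeWhile (fun a => decide (a.1 ≠ l)) ++ (M.dropWhile (fun a => decide (a.1 ≠ l))).take 1

/-- Decision literals preceding the first occurrence of `l` (including `l` if it is one). -/
def decisionsTo (l : Literal) (M : Trail) : List Literal := decisions (prefixTo l M)

/-- Decision level of a literal in a trail. -/
def levelOf (l : Literal) (M : Trail) : Nat := (decisionsTo l M).length

/-- Longest prefix of the trail containing only elements of level ≤ `lv`. -/
def prefixToLevel (lv : Nat) : Trail → Trail
  | [] => []
  | a :: M =>
      if a.2 then (if 0 < lv then a :: prefixToLevel (lv - 1) M else [])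
      else a :: prefixToLevel lv M

/-- The last decision literal of a trail (default `Pos 0` when there is none). -/
def lastDecision (M : Trail) : Literal := (decisions M).getLastD (Literal.Pos 0)

/-- The prefix of the trail before its last decision literal. -/
def prefixBeforeLastDecision (M : Trail) : Trail :=
  ((M.reverse.dropWhile (fun a => !a.2)).tail).reverse

/-- A clause is true in a valuation. -/
def clauseTrue (v : List Literal) (c : Clause) : Prop := ∃ l ∈ c, l ∈ v
/-- A formula is true in a valuation. -/
def formulaTrue (v : List Literal) (F : Formula) : Prop := ∀ c ∈ F, clauseTrue v c
/-- A clause is false in a valuation. -/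
def clauseFalse (v : List Literal) (c : Clause) : Prop := ∀ l ∈ c, l.opp ∈ v
/-- A formula is false in a valuation. -/
def formulaFalse (v : List Literal) (F : Formula) : Prop := ∃ c ∈ F, clauseFalse v c
/-- Consistency of a valuation. -/
def consistent (v : List Literal) : Prop := ¬ ∃ l, l ∈ v ∧ Literal.opp l ∈ v
/-- A model of a formula. -/
def isModel (v : List Literal) (F : Formula) : Prop := consistent v ∧ formulaTrue v F
/-- Satisfiability. -/
def sat (F : Formula) : Prop := ∃ v, isModel v F
/-- A formula entails a clause. -/
def entailsClause (F : Formula) (c : Clause) : Prop := ∀ v, isModel v F → clauseTrue v c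
/-- A formula entails a literal. -/
def entailsLit (F : Formula) (l : Literal) : Prop := ∀ v, isModel v F → l ∈ v
/-- Logical equivalence of formulae. -/
def equivFormula (F1 F2 : Formula) : Prop := ∀ v, isModel v F1 ↔ isModel v F2

/-- Variables of a formula. -/
def varsF (F : Formula) : Set Nat := {n | ∃ c ∈ F, ∃ l ∈ c, Literal.var l = n}
/-- Variables of a valuation. -/
def varsV (v : List Literal) : Set Nat := {n | ∃ l ∈ v, Literal.var l = n}
/-- Variables of a trail. -/
def varsT (M : Trail) : Set Nat := varsV (elements M)

/-- The formula of unit clauses corresponding to a list of literals. -/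
def valToForm (v : List Literal) : Formula := v.map (fun l => [l])

/-- A clause is unit in a valuation with unit literal `l`. -/
def isUnit (c : Clause) (l : Literal) (v : List Literal) : Prop :=
  l ∈ c ∧ l ∉ v ∧ l.opp ∉ v ∧ ∀ l' ∈ c, l' ≠ l → Literal.opp l' ∈ v

/-- `a` precedes `b` in the list `v` (first positions compared). -/
def precedes (a b : Literal) (v : List Literal) : Prop :=
  a ∈ v ∧ b ∈ v ∧ v.idxOf a < v.idxOf b

/-- A clause `c` is a reason for propagation of `l` in valuation `v`. -/
def isReason (c : Clause) (l : Literal) (v : List Literal) : Prop :=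
  l ∈ c ∧ l ∈ v ∧ ∀ l' ∈ c, l' ≠ l → Literal.opp l' ∈ v ∧ precedes (Literal.opp l') l v

/-- `l` is the literal of `c` asserted last in `v`. -/
def isLastAsserted (l : Literal) (c : List Literal) (v : List Literal) : Prop :=
  l ∈ c ∧ l ∈ v ∧ ∀ l' ∈ c, l' ∈ v → l' = l ∨ precedes l' l v

/-- The list of opposites of the literals of a clause. -/
def oppC (c : Clause) : List Literal := c.map Literal.opp

/-- `lv` is a backjump level for literal `l` and clause `c` w.r.t. trail `M`. -/
def isBackjumpLevel (lv : Nat) (l : Literal) (c : Clause) (M : Trail) : Prop :=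
  clauseFalse (elements M) c ∧ isLastAsserted l.opp (oppC c) (elements M) ∧
  lv < levelOf l.opp M ∧ ∀ l' ∈ c, l' ≠ l → levelOf (Literal.opp l') M ≤ lv

/-- Minimal backjump level. -/
def isMinimalBackjumpLevel (lv : Nat) (l : Literal) (c : Clause) (M : Trail) : Prop :=
  isBackjumpLevel lv l c M ∧ ∀ lv' < lv, ¬ isBackjumpLevel lv' l c M

/-- Unique implication point condition. -/
def isUIP (l : Literal) (c : Clause) (M : Trail) : Prop :=
  clauseFalse (elements M) c ∧ isLastAsserted l.opp (oppC c) (elements M) ∧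
  ∀ l' ∈ c, l' ≠ l → levelOf (Literal.opp l') M < levelOf l.opp M

/-- Resolution of clauses `C` and `c` over the literal `l`. -/
def resolve (C c : Clause) (l : Literal) : Clause :=
  C.filter (fun x => decide (x ≠ l)) ++ c.filter (fun x => decide (x ≠ l.opp))

/-- Lexicographic extension of a relation to lists. -/
def lexExt {X : Type _} (r : X → X → Prop) (s t : List X) : Prop :=
  (∃ rr, s = t ++ rr ∧ rr ≠ []) ∨
  (∃ rr s' t' a b, s = rr ++ a :: s' ∧ t = rr ++ b :: t' ∧ r a b)

/-- Ordering on annotated literals: decisions are greater than non-decisions. -/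
def litSucc (a b : Literal × Bool) : Prop := a.2 = true ∧ b.2 = false

/-- Trail ordering: lexicographic extension of `litSucc`. -/
def trailSucc : Trail → Trail → Prop := lexExt litSucc

/-- One step of the multiset extension of a relation. -/
def multExtStep {α : Type _} (r : α → α → Prop) (S1 S2 : Multiset α) : Prop :=
  ∃ (S S2' : Multiset α) (s1 : α), S1 = S + {s1} ∧ S2 = S + S2' ∧ ∀ s2 ∈ S2', r s1 s2

/-- Multiset extension: transitive closure of `multExtStep`. -/
def multExt {α : Type _} (r : α → α → Prop) : Multiset α → Multiset α → Prop :=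
  Relation.TransGen (multExtStep r)

/-- Clause ordering induced by a trail `M` (as a list of literals). -/
def clauseSucc (M : List Literal) (C1 C2 : Clause) : Prop :=
  multExt (fun a b => precedes a b M)
    ((oppC C2).dedup : Multiset Literal) ((oppC C1).dedup : Multiset Literal)

/-! ## Basic DPLL system -/

abbrev DState := Trail × Formula

def decideR (DecVars : Set Nat) (s1 s2 : DState) : Prop :=
  ∃ l : Literal, l.var ∈ DecVars ∧ l ∉ elements s1.1 ∧ l.opp ∉ elements s1.1 ∧
    s2.1 = s1.1 ++ [(l, true)] ∧ s2.2 = s1.2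

def unitPropagateR (s1 s2 : DState) : Prop :=
  ∃ c l, c ∈ s1.2 ∧ isUnit c l (elements s1.1) ∧
    s2.1 = s1.1 ++ [(l, false)] ∧ s2.2 = s1.2

def backtrackR (s1 s2 : DState) : Prop :=
  formulaFalse (elements s1.1) s1.2 ∧ decisions s1.1 ≠ [] ∧
  s2.1 = prefixBeforeLastDecision s1.1 ++ [((lastDecision s1.1).opp, false)] ∧ s2.2 = s1.2

def stepD (DecVars : Set Nat) (s1 s2 : DState) : Prop :=
  unitPropagateR s1 s2 ∨ backtrackR s1 s2 ∨ decideR DecVars s1 s2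

def accepting (DecVars : Set Nat) (s : DState) : Prop :=
  ¬ formulaFalse (elements s.1) s.2 ∧
  ¬ ∃ l : Literal, l.var ∈ DecVars ∧ l ∉ elements s.1 ∧ l.opp ∉ elements s.1

def rejecting (s : DState) : Prop :=
  formulaFalse (elements s.1) s.2 ∧ decisions s.1 = []

/-! ## Conflict analysis system -/

abbrev CState := Trail × Formula × Clause × Bool

def c_decide (DecVars : Set Nat) : CState → CState → Prop :=
  fun (M1, F1, C1, b1) (M2, F2, C2, b2) =>
    (∃ l : Literal, l.var ∈ DecVars ∧ l ∉ elements M1 ∧ l.opp ∉ elements M1 ∧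
      M2 = M1 ++ [(l, true)]) ∧ F2 = F1 ∧ C2 = C1 ∧ b2 = b1

def c_unitPropagate (Vars : Set Nat) : CState → CState → Prop :=
  fun (M1, F1, C1, b1) (M2, F2, C2, b2) =>
    (∃ (c : Clause) (l : Literal), entailsClause F1 c ∧ l.var ∈ Vars ∧
      isUnit c l (elements M1) ∧ M2 = M1 ++ [(l, false)]) ∧
    F2 = F1 ∧ C2 = C1 ∧ b2 = b1

def c_conflict : CState → CState → Prop :=
  fun (M1, F1, C1, b1) (M2, F2, C2, b2) =>
    b1 = false ∧ (∃ c : Clause, entailsClause F1 c ∧ clauseFalse (elements M1) c ∧ C2 = c) ∧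
    M2 = M1 ∧ F2 = F1 ∧ b2 = true ∧ C1 = C1

def c_explain : CState → CState → Prop :=
  fun (M1, F1, C1, b1) (M2, F2, C2, b2) =>
    b1 = true ∧ (∃ (l : Literal) (c : Clause), l ∈ C1 ∧ isReason c l.opp (elements M1) ∧
      entailsClause F1 c ∧ C2 = resolve C1 c l) ∧
    M2 = M1 ∧ F2 = F1 ∧ b2 = true

def c_backjump : CState → CState → Prop :=
  fun (M1, F1, C1, b1) (M2, F2, C2, b2) =>
    b1 = true ∧ (∃ (l : Literal) (lv : Nat), isBackjumpLevel lv l C1 M1 ∧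
      M2 = prefixToLevel lv M1 ++ [(l, false)]) ∧
    F2 = F1 ∧ C2 = [] ∧ b2 = false

def c_learn : CState → CState → Prop :=
  fun (M1, F1, C1, b1) (M2, F2, C2, b2) =>
    b1 = true ∧ C1 ∉ F1 ∧ M2 = M1 ∧ F2 = F1 ++ [C1] ∧ C2 = C1 ∧ b2 = b1

def stepC (F0 : Formula) (DecVars : Set Nat) (s1 s2 : CState) : Prop :=
  c_decide DecVars s1 s2 ∨ c_unitPropagate (varsF F0 ∪ DecVars) s1 s2 ∨
  c_conflict s1 s2 ∨ c_explain s1 s2 ∨ c_backjump s1 s2 ∨ c_learn s1 s2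

/-! ## System with restarts and forgetting -/

abbrev RState := Trail × Formula × Clause × Bool × Bool

def r_decide (F0 : Formula) (DecVars : Set Nat) : RState → RState → Prop :=
  fun (M1, Fl1, C1, cf1, ln1) (M2, Fl2, C2, cf2, ln2) =>
    (∃ l : Literal, l.var ∈ DecVars ∧ l ∉ elements M1 ∧ l.opp ∉ elements M1 ∧
      M2 = M1 ++ [(l, true)]) ∧
    (¬ ∃ (c : Clause) (l : Literal), c ∈ F0 ++ Fl1 ∧ isUnit c l (elements M1)) ∧
    Fl2 = Fl1 ∧ C2 = C1 ∧ cf2 = cf1 ∧ ln2 = ln1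

def r_unitPropagate (F0 : Formula) : RState → RState → Prop :=
  fun (M1, Fl1, C1, cf1, ln1) (M2, Fl2, C2, cf2, ln2) =>
    (∃ (c : Clause) (l : Literal), c ∈ F0 ++ Fl1 ∧ isUnit c l (elements M1) ∧
      M2 = M1 ++ [(l, false)]) ∧
    Fl2 = Fl1 ∧ C2 = C1 ∧ cf2 = cf1 ∧ ln2 = ln1

def r_conflict (F0 : Formula) : RState → RState → Prop :=
  fun (M1, Fl1, C1, cf1, ln1) (M2, Fl2, C2, cf2, ln2) =>
    cf1 = false ∧ (∃ c : Clause, c ∈ F0 ++ Fl1 ∧ clauseFalse (elements M1) c ∧ C2 = c) ∧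
    M2 = M1 ∧ Fl2 = Fl1 ∧ cf2 = true ∧ ln2 = ln1 ∧ C1 = C1

def r_explain (F0 : Formula) : RState → RState → Prop :=
  fun (M1, Fl1, C1, cf1, ln1) (M2, Fl2, C2, cf2, ln2) =>
    cf1 = true ∧ (∃ (l : Literal) (c : Clause), l ∈ C1 ∧ isReason c l.opp (elements M1) ∧
      c ∈ F0 ++ Fl1 ∧ C2 = resolve C1 c l) ∧
    M2 = M1 ∧ Fl2 = Fl1 ∧ cf2 = true ∧ ln2 = ln1

def r_backjumpLearn : RState → RState → Prop :=
  fun (M1, Fl1, C1, cf1, _ln1) (M2, Fl2, C2, cf2, ln2) =>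
    cf1 = true ∧ (∃ (l : Literal) (lv : Nat), isMinimalBackjumpLevel lv l C1 M1 ∧
      M2 = prefixToLevel lv M1 ++ [(l, false)]) ∧
    Fl2 = Fl1 ++ [C1] ∧ C2 = [] ∧ cf2 = false ∧ ln2 = true

def r_forget : RState → RState → Prop :=
  fun (M1, Fl1, C1, cf1, ln1) (M2, Fl2, C2, cf2, ln2) =>
    cf1 = false ∧ ln1 = true ∧
    (∃ Fc : Formula, (∀ c ∈ Fc, c ∈ Fl1) ∧
      (∀ c ∈ Fc, ¬ ∃ l : Literal, isReason c l (elements M1)) ∧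
      Fl2 = Fl1.filter (fun c => decide (c ∉ Fc))) ∧
    M2 = M1 ∧ C2 = C1 ∧ cf2 = cf1 ∧ ln2 = false

def r_restart : RState → RState → Prop :=
  fun (M1, Fl1, C1, cf1, ln1) (M2, Fl2, C2, cf2, ln2) =>
    cf1 = false ∧ ln1 = true ∧
    M2 = prefixToLevel 0 M1 ∧ Fl2 = Fl1 ∧ C2 = C1 ∧ cf2 = cf1 ∧ ln2 = false

/-- The system without `forget` (with `restart`). -/
def stepF (F0 : Formula) (DecVars : Set Nat) (s1 s2 : RState) : Prop :=
  r_decide F0 DecVars s1 s2 ∨ r_unitPropagate F0 s1 s2 ∨ r_conflict F0 s1 s2 ∨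
  r_explain F0 s1 s2 ∨ r_backjumpLearn s1 s2 ∨ r_restart s1 s2

/-- The full system with both `restart` and `forget`. -/
def stepAll (F0 : Formula) (DecVars : Set Nat) (s1 s2 : RState) : Prop :=
  stepF F0 DecVars s1 s2 ∨ r_forget s1 s2

/-- Normalization of a formula: remove duplicate literals and duplicate clauses. -/
def normF (F : Formula) : Formula := (F.map List.dedup).dedup

/-! Invariant: the trail is consistent and no clause of the current formula is unit in any
prefix `prefixToLevel k M` with `k` below the current level. `decide` preserves it because
propagation is eager, implied literals and truncations (backjump, restart) open no new lower
level, and a clause learnt at a *minimal* backjump level `lv` is unit at no level below `lv`.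
But a clause `C` to which `backjumpLearn` applies at level `lv` is unit in
`prefixToLevel lv M`, with `lv` below the current level, so `C` is not yet in the formula. -/

namespace Literal

theorem opp_opp (l : Literal) : l.opp.opp = l := by cases l <;> rfl

theorem opp_injective : Function.Injective Literal.opp :=
  Function.LeftInverse.injective opp_opp

theorem opp_ne_self (l : Literal) : l.opp ≠ l := by cases l <;> simp [Literal.opp]

end Literal

@[simp] theorem elements_nil : elements [] = [] := rfl

@[simp] theorem elements_cons (a : Literal × Bool) (M : Trail) :
    elements (a :: M) = a.1 :: elements M := rfl

@[simp] theorem elements_append (M N : Trail) : elements (M ++ N) = elements M ++ elements N :=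
  List.map_append

@[simp] theorem currentLevel_nil : currentLevel [] = 0 := rfl

@[simp] theorem currentLevel_cons (a : Literal × Bool) (M : Trail) :
    currentLevel (a :: M) = currentLevel M + if a.2 then 1 else 0 := by
  cases h : a.2 <;> simp [currentLevel, h]

@[simp] theorem currentLevel_append (M N : Trail) :
    currentLevel (M ++ N) = currentLevel M + currentLevel N := by
  simp [currentLevel, List.filter_append]

@[simp] theorem prefixToLevel_nil (lv : Nat) : prefixToLevel lv [] = [] := rfl

@[simp] theorem prefixToLevel_cons_false (lv : Nat) (x : Literal) (M : Trail) :
    prefixToLevel lv ((x, false) :: M) = (x, false) :: prefixToLevel lv M := rfl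

@[simp] theorem prefixToLevel_zero_cons_true (x : Literal) (M : Trail) :
    prefixToLevel 0 ((x, true) :: M) = [] := rfl

@[simp] theorem prefixToLevel_succ_cons_true (lv : Nat) (x : Literal) (M : Trail) :
    prefixToLevel (lv + 1) ((x, true) :: M) = (x, true) :: prefixToLevel lv M := by
  simp [prefixToLevel]

theorem prefixToLevel_prefix (lv : Nat) (M : Trail) : prefixToLevel lv M <+: M := by
  induction M generalizing lv with
  | nil => simp
  | cons a M ih =>
    obtain ⟨x, _ | _⟩ := a
    · simpa using ih lv
    · cases lv <;> simp [ih]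

theorem elements_prefixToLevel_subset (lv : Nat) (M : Trail) :
    elements (prefixToLevel lv M) ⊆ elements M :=
  ((prefixToLevel_prefix lv M).sublist.map Prod.fst).subset

theorem currentLevel_prefixToLevel (lv : Nat) (M : Trail) :
    currentLevel (prefixToLevel lv M) = min lv (currentLevel M) := by
  induction M generalizing lv with
  | nil => simp
  | cons a M ih =>
    obtain ⟨x, _ | _⟩ := a
    · simp [ih]
    · cases lv <;> simp [ih]

theorem prefixToLevel_append_of_lt {lv : Nat} {M : Trail} (h : lv < currentLevel M)
    (N : Trail) : prefixToLevel lv (M ++ N) = prefixToLevel lv M := by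
  induction M generalizing lv with
  | nil => simp at h
  | cons a M ih =>
    obtain ⟨x, _ | _⟩ := a
    · simp_all
    · cases lv with
      | zero => rfl
      | succ lv => simpa using ih (by simpa using h)

theorem prefixToLevel_currentLevel_append_decision (M : Trail) (l : Literal) :
    prefixToLevel (currentLevel M) (M ++ [(l, true)]) = M := by
  induction M with
  | nil => simp
  | cons a M ih =>
    obtain ⟨x, _ | _⟩ := a <;> simp [ih]

theorem prefixToLevel_prefixToLevel {k lv : Nat} (h : k ≤ lv) (M : Trail) :
    prefixToLevel k (prefixToLevel lv M) = prefixToLevel k M := by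
  induction M generalizing k lv with
  | nil => simp
  | cons a M ih =>
    obtain ⟨x, _ | _⟩ := a
    · simp [ih h]
    · cases k <;> cases lv <;> simp_all

theorem levelOf_cons (x : Literal) (a : Literal × Bool) (M : Trail) :
    levelOf x (a :: M) =
      (if a.1 = x then 0 else levelOf x M) + if a.2 then 1 else 0 := by
  obtain ⟨y, b⟩ := a
  by_cases h : y = x <;> cases b <;> simp [levelOf, decisionsTo, prefixTo, decisions, h]

theorem levelOf_le_currentLevel (x : Literal) (M : Trail) :
    levelOf x M ≤ currentLevel M := by
  induction M with
  | nil => simp [levelOf, decisionsTo, prefixTo, decisions]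
  | cons a M ih => rw [levelOf_cons, currentLevel_cons]; split_ifs <;> omega

theorem mem_elements_prefixToLevel_iff {x : Literal} {M : Trail} (hx : x ∈ elements M)
    (lv : Nat) : x ∈ elements (prefixToLevel lv M) ↔ levelOf x M ≤ lv := by
  induction M generalizing lv with
  | nil => simp at hx
  | cons a M ih =>
    obtain ⟨y, _ | _⟩ := a
    · by_cases h : y = x
      · simp [levelOf_cons, h]
      · have hx' : x ∈ elements M := by simpa [Ne.symm h] using hx
        simp [levelOf_cons, h, Ne.symm h, ih hx']
    · by_cases h : y = x
      · cases lv <;> simp [levelOf_cons, h]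
      · have hx' : x ∈ elements M := by simpa [Ne.symm h] using hx
        cases lv <;> simp [levelOf_cons, h, Ne.symm h, ih hx']

theorem consistent.subset {v w : List Literal} (hw : consistent w) (h : v ⊆ w) :
    consistent v :=
  fun ⟨l, h1, h2⟩ => hw ⟨l, h h1, h h2⟩

theorem consistent.append_singleton {v : List Literal} {l : Literal} (hv : consistent v)
    (h1 : l ∉ v) (h2 : l.opp ∉ v) : consistent (v ++ [l]) := by
  rintro ⟨x, hx, hxo⟩
  simp only [List.mem_append, List.mem_singleton] at hx hxo
  rcases hx with hx | rfl <;> rcases hxo with hxo | hxo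
  · exact hv ⟨x, hx, hxo⟩
  · exact h2 (hxo ▸ x.opp_opp.symm ▸ hx)
  · exact h2 hxo
  · exact x.opp_ne_self hxo

theorem mem_of_opp_mem_oppC {l : Literal} {C : Clause} (h : l.opp ∈ oppC C) : l ∈ C := by
  obtain ⟨y, hy, hyl⟩ := List.mem_map.mp h
  rwa [← Literal.opp_injective hyl]

section Backjump

variable {lv : Nat} {l : Literal} {C : Clause} {M : Trail}

theorem isBackjumpLevel.lt_currentLevel (h : isBackjumpLevel lv l C M) :
    lv < currentLevel M :=
  h.2.2.1.trans_le (levelOf_le_currentLevel _ _)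

theorem isBackjumpLevel.isUnit_prefixToLevel (h : isBackjumpLevel lv l C M)
    (hcons : consistent (elements M)) : isUnit C l (elements (prefixToLevel lv M)) := by
  obtain ⟨hfalse, hlast, hlt, hother⟩ := h
  have hlC : l ∈ C := mem_of_opp_mem_oppC hlast.1
  have hloppM : l.opp ∈ elements M := hfalse l hlC
  refine ⟨hlC, fun hl => hcons ⟨l, elements_prefixToLevel_subset lv M hl, hloppM⟩, ?_, ?_⟩
  · rw [mem_elements_prefixToLevel_iff hloppM]
    omega
  · intro l' hl' hne
    exact (mem_elements_prefixToLevel_iff (hfalse l' hl') lv).mpr (hother l' hl' hne)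

theorem isMinimalBackjumpLevel.not_isUnit_prefixToLevel (h : isMinimalBackjumpLevel lv l C M)
    {k : Nat} (hk : k < lv) (l'' : Literal) :
    ¬ isUnit C l'' (elements (prefixToLevel k M)) := by
  obtain ⟨⟨hfalse, hlast, hlt, hother⟩, hmin⟩ := h
  have hlC : l ∈ C := mem_of_opp_mem_oppC hlast.1
  -- Minimality at `lv - 1` gives a second literal of `C` that, like `l`, is not false below `lv`.
  obtain ⟨l', hl'C, hl'l, hl'lv⟩ : ∃ l' ∈ C, l' ≠ l ∧ lv ≤ levelOf l'.opp M := by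
    by_contra! hcon
    exact hmin (lv - 1) (by omega)
      ⟨hfalse, hlast, by omega, fun l' hl' hne => by have := hcon l' hl' hne; omega⟩
  have not_false_below (x : Literal) (hx : x ∈ C) (hxlv : lv ≤ levelOf x.opp M) :
      x.opp ∉ elements (prefixToLevel k M) := by
    rw [mem_elements_prefixToLevel_iff (hfalse x hx)]
    omega
  rintro ⟨-, -, -, hopp⟩
  by_cases hl'' : l'' = l
  · exact not_false_below l' hl'C hl'lv (hopp l' hl'C (hl''.symm ▸ hl'l))
  · exact not_false_below l hlC hlt.le (hopp l hlC (Ne.symm hl''))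

end Backjump

structure LowerLevelsPropagated (F : Formula) (M : Trail) : Prop where
  consistent_elements : consistent (elements M)
  not_isUnit : ∀ k < currentLevel M, ∀ c ∈ F, ∀ l, ¬ isUnit c l (elements (prefixToLevel k M))

namespace LowerLevelsPropagated

variable {F : Formula} {M : Trail}

theorem nil (F : Formula) : LowerLevelsPropagated F [] :=
  ⟨fun ⟨_, hl, _⟩ => by simp at hl, fun k hk => by simp at hk⟩

theorem prefixToLevel (h : LowerLevelsPropagated F M) (lv : Nat) :
    LowerLevelsPropagated F (SatFormal.prefixToLevel lv M) := by
  refine ⟨h.consistent_elements.subset (elements_prefixToLevel_subset lv M), ?_⟩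
  intro k hk
  rw [currentLevel_prefixToLevel, lt_min_iff] at hk
  rw [prefixToLevel_prefixToLevel hk.1.le]
  exact h.not_isUnit k hk.2

theorem append_implied (h : LowerLevelsPropagated F M) {l : Literal}
    (h1 : l ∉ elements M) (h2 : l.opp ∉ elements M) :
    LowerLevelsPropagated F (M ++ [(l, false)]) := by
  refine ⟨by simpa using h.consistent_elements.append_singleton h1 h2, ?_⟩
  intro k hk
  simp only [currentLevel_append, currentLevel_cons, currentLevel_nil, Bool.false_eq_true,
    if_false, add_zero] at hk
  rw [prefixToLevel_append_of_lt hk]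
  exact h.not_isUnit k hk

theorem append_decision (h : LowerLevelsPropagated F M) {l : Literal}
    (h1 : l ∉ elements M) (h2 : l.opp ∉ elements M)
    (hnu : ∀ c ∈ F, ∀ l', ¬ isUnit c l' (elements M)) :
    LowerLevelsPropagated F (M ++ [(l, true)]) := by
  refine ⟨by simpa using h.consistent_elements.append_singleton h1 h2, ?_⟩
  intro k hk
  simp only [currentLevel_append, currentLevel_cons, currentLevel_nil, if_true] at hk
  rcases Nat.lt_succ_iff_lt_or_eq.mp hk with hk | rfl
  · rw [prefixToLevel_append_of_lt hk]
    exact h.not_isUnit k hk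
  · rwa [prefixToLevel_currentLevel_append_decision]

theorem learn (h : LowerLevelsPropagated F M) {C : Clause}
    (hC : ∀ k < currentLevel M, ∀ l, ¬ isUnit C l (elements (SatFormal.prefixToLevel k M))) :
    LowerLevelsPropagated (F ++ [C]) M := by
  refine ⟨h.consistent_elements, fun k hk c hc => ?_⟩
  rcases List.mem_append.mp hc with hc | hc
  · exact h.not_isUnit k hk c hc
  · exact List.mem_singleton.mp hc ▸ hC k hk

theorem backjumpLearn (h : LowerLevelsPropagated F M) {lv : Nat} {l : Literal} {C : Clause}
    (hmin : isMinimalBackjumpLevel lv l C M) :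
    LowerLevelsPropagated (F ++ [C]) (SatFormal.prefixToLevel lv M ++ [(l, false)]) := by
  have hunit := hmin.1.isUnit_prefixToLevel h.consistent_elements
  have hlv : currentLevel (SatFormal.prefixToLevel lv M) = lv := by
    rw [currentLevel_prefixToLevel, min_eq_left hmin.1.lt_currentLevel.le]
  refine ((h.prefixToLevel lv).learn fun k hk => ?_).append_implied hunit.2.1 hunit.2.2.1
  rw [prefixToLevel_prefixToLevel (by omega)]
  exact hmin.not_isUnit_prefixToLevel (by omega)

end LowerLevelsPropagated

theorem LowerLevelsPropagated.of_stepF {F0 : Formula} {DecVars : Set Nat} {s t : RState}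
    (hst : stepF F0 DecVars s t) (h : LowerLevelsPropagated (F0 ++ s.2.1) s.1) :
    LowerLevelsPropagated (F0 ++ t.2.1) t.1 := by
  obtain ⟨M, Fl, C, cf, ln⟩ := s
  obtain ⟨M', Fl', C', cf', ln'⟩ := t
  rcases hst with ⟨⟨l, -, h1, h2, rfl⟩, hnu, rfl, -⟩ | ⟨⟨c, l, -, hu, rfl⟩, rfl, -⟩ |
      ⟨-, -, rfl, rfl, -⟩ | ⟨-, -, rfl, rfl, -⟩ | ⟨-, ⟨l, lv, hmin, rfl⟩, rfl, -⟩ |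
      ⟨-, -, rfl, rfl, -⟩
  · exact h.append_decision h1 h2 fun c hc l' hu => hnu ⟨c, l', hc, hu⟩
  · exact h.append_implied hu.2.1 hu.2.2.1
  · exact h
  · exact h
  · simpa only [List.append_assoc] using h.backjumpLearn hmin
  · exact h.prefixToLevel 0

theorem lowerLevelsPropagated_of_reflTransGen {F0 : Formula} {DecVars : Set Nat} {s : RState}
    (h : Relation.ReflTransGen (stepF F0 DecVars) ([], [], [], false, false) s) :
    LowerLevelsPropagated (F0 ++ s.2.1) s.1 := by
  induction h with
  | refl => exact .nil _
  | tail _ hstep ih => exact ih.of_stepF hstep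

/-- in the system without forget, learnt clauses are always fresh. -/
theorem stmt18 (F0 : Formula) (DecVars : Set Nat)
    (MA : Trail) (FlA : Formula) (CA : Clause) (lntA : Bool)
    (hreach : Relation.ReflTransGen (stepF F0 DecVars)
      ([], [], [], false, false) (MA, FlA, CA, true, lntA))
    (happ : ∃ sB, r_backjumpLearn (MA, FlA, CA, true, lntA) sB) :
    CA ∉ F0 ++ FlA := by
  obtain ⟨_, -, ⟨l, lv, hmin, -⟩, -⟩ := happ
  have hinv : LowerLevelsPropagated (F0 ++ FlA) MA := lowerLevelsPropagated_of_reflTransGen hreach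
  exact fun hmem => hinv.not_isUnit lv hmin.1.lt_currentLevel CA hmem l
    (hmin.1.isUnit_prefixToLevel hinv.consistent_elements)

end SatFormal
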